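/- Let α ∈ (0,1) and let z > 0 satisfy Φ(z) = 1 − α/2. Suppose (T_k)_{k≥1} is a sequence of real random variables such that there exist an even polynomial q_3 and functions r_k with sup_{x∈ℝ} |r_k(x)| = O(k^{−2}) and P(T_k ≤ x) = Φ(x) + q_1(x)φ(x)/√k + q_2(x)φ(x)/k + q_3(x)φ(x)/k^{3/2} + r_k(x) for all x ∈ ℝ, where q_1(x) = √2 + (2√2/3)(x² − 1) and q_2(x) = −5x − (23/6)(x³ − 3x) + (4/9)(x⁵ − 10x³ + 15x). Set c_k = z − q_2(z)/k. Then the Edgeworth-corrected two-sided coverage satisfies P(−c_k < T_k ≤ c_k) = (1 − α) + O(1/k²) as k → ∞. -/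

import Mathlib

open MeasureTheory ProbabilityTheory Real Filter

/-- The cumulative distribution function `Φ` of the standard normal distribution. -/
noncomputable def stdNormalCDF (x : ℝ) : ℝ :=
  ((gaussianReal 0 1) (Set.Iic x)).toReal

/-- The density `φ` of the standard normal distribution. -/
noncomputable def stdNormalPDF (x : ℝ) : ℝ :=
  gaussianPDFReal 0 1 x

/-!
Evaluating the expansion at `±c_k`, the even terms `q₁φ` and `q₃φ` cancel and the odd term
`q₂φ` doubles, so `P(-c_k < T_k ≤ c_k) = 2Φ(c_k) - 1 + 2q₂(c_k)φ(c_k)/k + O(k⁻²)`. Expanding `Φ`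
to first order at `z`, the shift `c_k - z = -q₂(z)/k` contributes `-2q₂(z)φ(z)/k`, which cancels
the correction term up to `((q₂φ)(c_k) - (q₂φ)(z))/k = O((c_k - z)/k) = O(k⁻²)`; the Taylor
remainder is `O((c_k - z)²)` because `φ` is `1`-Lipschitz.
-/

open Asymptotics Topology

lemma stdNormalPDF_eq (x : ℝ) : stdNormalPDF x = (√(2 * π))⁻¹ * exp (-x ^ 2 / 2) := by
  simp [stdNormalPDF, gaussianPDFReal]

lemma stdNormalPDF_neg (x : ℝ) : stdNormalPDF (-x) = stdNormalPDF x := by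
  simp [stdNormalPDF_eq]

lemma stdNormalPDF_nonneg (x : ℝ) : 0 ≤ stdNormalPDF x := gaussianPDFReal_nonneg 0 1 x

lemma hasDerivAt_stdNormalPDF (x : ℝ) :
    HasDerivAt stdNormalPDF (-x * stdNormalPDF x) x := by
  have h := (((hasDerivAt_pow 2 x).neg.div_const 2).exp).const_mul (√(2 * π))⁻¹
  rw [funext stdNormalPDF_eq]
  exact h.congr_deriv (by simp; ring)

lemma abs_mul_stdNormalPDF_le_one (x : ℝ) : |x * stdNormalPDF x| ≤ 1 := by
  have hx : |x| ≤ exp (x ^ 2 / 2) := by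
    nlinarith [add_one_le_exp (x ^ 2 / 2), sq_abs x, sq_nonneg (|x| - 1)]
  have hc : (√(2 * π))⁻¹ ≤ 1 :=
    inv_le_one_of_one_le₀ (one_le_sqrt.mpr (by nlinarith [pi_gt_three]))
  rw [abs_mul, abs_of_nonneg (stdNormalPDF_nonneg x), stdNormalPDF_eq, neg_div, exp_neg]
  calc |x| * ((√(2 * π))⁻¹ * (exp (x ^ 2 / 2))⁻¹)
      = (√(2 * π))⁻¹ * (|x| * (exp (x ^ 2 / 2))⁻¹) := by ring
    _ ≤ 1 * 1 := by
      gcongr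
      exact mul_inv_le_one_of_le₀ hx (exp_pos _).le
    _ = 1 := one_mul 1

lemma differentiable_stdNormalPDF : Differentiable ℝ stdNormalPDF :=
  fun x => (hasDerivAt_stdNormalPDF x).differentiableAt

lemma lipschitzWith_one_stdNormalPDF : LipschitzWith 1 stdNormalPDF := by
  refine lipschitzWith_of_nnnorm_deriv_le differentiable_stdNormalPDF fun x => ?_
  rw [(hasDerivAt_stdNormalPDF x).deriv, ← NNReal.coe_le_coe, coe_nnnorm, neg_mul, norm_neg]
  exact abs_mul_stdNormalPDF_le_one x

lemma stdNormalCDF_neg (x : ℝ) : stdNormalCDF (-x) = 1 - stdNormalCDF x := by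
  have hsymm : gaussianReal 0 1 (Set.Iic (-x)) = gaussianReal 0 1 (Set.Ioi x) := by
    have := nullSingletonClass_gaussianReal (μ := 0) one_ne_zero
    have hneg : (gaussianReal 0 1).map (fun x => -x) = gaussianReal 0 1 := by
      simpa using gaussianReal_map_neg (μ := 0) (v := 1)
    rw [measure_congr Ioi_ae_eq_Ici]
    conv_lhs => rw [← hneg, Measure.map_apply measurable_neg measurableSet_Iic]
    congr 1
    ext
    simp
  rw [stdNormalCDF, stdNormalCDF, hsymm, ← Set.compl_Iic, prob_compl_eq_one_sub measurableSet_Iic,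
    ENNReal.toReal_sub_of_le prob_le_one ENNReal.one_ne_top, ENNReal.toReal_one]

lemma stdNormalCDF_sub (a b : ℝ) :
    stdNormalCDF b - stdNormalCDF a = ∫ t in a..b, stdNormalPDF t := by
  have hIic (x : ℝ) : stdNormalCDF x = ∫ t in Set.Iic x, stdNormalPDF t := by
    rw [stdNormalCDF, gaussianReal_apply_eq_integral 0 one_ne_zero, ENNReal.toReal_ofReal
      (setIntegral_nonneg measurableSet_Iic fun t _ => gaussianPDFReal_nonneg 0 1 t)]
    rfl
  have hint : Integrable stdNormalPDF := integrable_gaussianPDFReal 0 1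
  rw [hIic, hIic, intervalIntegral.integral_Iic_sub_Iic hint.integrableOn hint.integrableOn]

lemma abs_intervalIntegral_sub_mul_le {f : ℝ → ℝ} {K : NNReal} (hf : LipschitzWith K f)
    (a b : ℝ) : |(∫ t in a..b, f t) - f a * (b - a)| ≤ K * (b - a) ^ 2 := by
  have hlip : ∀ t ∈ Set.uIoc a b, ‖f t - f a‖ ≤ K * |b - a| := fun t ht => by
    simpa [← dist_eq_norm, Real.dist_eq] using (hf.dist_le_mul t a).trans
      (by gcongr; exact Set.abs_sub_left_of_mem_uIcc (Set.uIoc_subset_uIcc ht))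
  have := intervalIntegral.norm_integral_le_of_norm_le_const hlip
  rwa [intervalIntegral.integral_sub (hf.continuous.intervalIntegrable a b)
    intervalIntegrable_const, intervalIntegral.integral_const, smul_eq_mul, Real.norm_eq_abs,
    mul_comm (b - a), mul_assoc, abs_mul_abs_self, ← sq] at this

lemma abs_stdNormalCDF_sub_sub_mul_le (a b : ℝ) :
    |stdNormalCDF b - stdNormalCDF a - stdNormalPDF a * (b - a)| ≤ (b - a) ^ 2 := by
  simpa [stdNormalCDF_sub] using abs_intervalIntegral_sub_mul_le lipschitzWith_one_stdNormalPDF a b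

lemma isBigO_stdNormalCDF_sub_sub_mul {ι : Type*} {l : Filter ι} {u v : ι → ℝ} {z : ℝ}
    (h : (fun i => u i - z) =O[l] v) :
    (fun i => stdNormalCDF (u i) - stdNormalCDF z - stdNormalPDF z * (u i - z))
      =O[l] fun i => v i ^ 2 :=
  (isBigO_of_le l fun i => by
    simpa using abs_stdNormalCDF_sub_sub_mul_le z (u i)).trans (h.pow 2)

lemma isBigO_sub_of_abs_le_div_sq {r : ℕ → ℝ → ℝ} {C : ℝ} {K : ℕ}
    (hr : ∀ k, K ≤ k → ∀ x, |r k x| ≤ C / (k : ℝ) ^ 2) (u v : ℕ → ℝ) :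
    (fun k => r k (u k) - r k (v k)) =O[atTop] fun k : ℕ => (1 / (k : ℝ)) ^ 2 := by
  refine IsBigO.of_bound (2 * C) ?_
  filter_upwards [eventually_ge_atTop K] with k hk
  simpa [two_mul, div_eq_mul_inv, add_mul] using
    (abs_sub _ _).trans (add_le_add (hr k hk (u k)) (hr k hk (v k)))

lemma toReal_measure_lt_and_le_eq_sub {Ω : Type*} [MeasurableSpace Ω] {μ : Measure Ω}
    [IsFiniteMeasure μ] {X : Ω → ℝ} (hX : Measurable X) {a b : ℝ} (hab : a ≤ b) :
    (μ {ω | a < X ω ∧ X ω ≤ b}).toReal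
      = (μ {ω | X ω ≤ b}).toReal - (μ {ω | X ω ≤ a}).toReal := by
  have hset : {ω | a < X ω ∧ X ω ≤ b} = {ω | X ω ≤ b} \ {ω | X ω ≤ a} := by
    ext ω
    simp [and_comm]
  exact hset ▸ measureReal_sdiff (fun ω (h : X ω ≤ a) => h.trans hab) (hX measurableSet_Iic)

lemma edgeworth_sub_neg {F q₁ q₂ q₃ ρ : ℝ → ℝ} {s k t : ℝ}
    (h₁ : q₁.Even) (h₂ : q₂.Odd) (h₃ : q₃.Even)
    (hF : ∀ x, F x = stdNormalCDF x + q₁ x * stdNormalPDF x / s + q₂ x * stdNormalPDF x / k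
      + q₃ x * stdNormalPDF x / t + ρ x) (x : ℝ) :
    F x - F (-x)
      = 2 * stdNormalCDF x - 1 + 2 * (q₂ x * stdNormalPDF x) / k + (ρ x - ρ (-x)) := by
  rw [hF, hF, h₁, h₂, h₃, stdNormalPDF_neg, stdNormalCDF_neg]
  ring

theorem corrected_two_sided_coverage_general
    {Ω : Type*} [MeasurableSpace Ω] (μ : Measure Ω) [IsProbabilityMeasure μ]
    (T : ℕ → Ω → ℝ) (hmeas : ∀ k, Measurable (T k))
    (q₁ q₂ : ℝ → ℝ)
    (hq₁ : ∀ y, q₁ y = Real.sqrt 2 + (2 * Real.sqrt 2 / 3) * (y ^ 2 - 1))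
    (hq₂ : ∀ y, q₂ y = -5 * y - (23 / 6) * (y ^ 3 - 3 * y)
        + (4 / 9) * (y ^ 5 - 10 * y ^ 3 + 15 * y))
    (α : ℝ)
    (z : ℝ) (hzpos : 0 < z) (hz : stdNormalCDF z = 1 - α / 2)
    (hEdge : ∃ q₃ : Polynomial ℝ, (∀ y : ℝ, q₃.eval (-y) = q₃.eval y) ∧
        ∃ r : ℕ → ℝ → ℝ,
          (∃ C > (0 : ℝ), ∃ K : ℕ, ∀ k : ℕ, K ≤ k → ∀ x : ℝ, |r k x| ≤ C / (k : ℝ) ^ 2) ∧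
          ∀ k : ℕ, 1 ≤ k → ∀ x : ℝ,
            (μ {ω | T k ω ≤ x}).toReal
              = stdNormalCDF x + q₁ x * stdNormalPDF x / Real.sqrt k
                + q₂ x * stdNormalPDF x / (k : ℝ)
                + q₃.eval x * stdNormalPDF x / (k : ℝ) ^ ((3 : ℝ) / 2)
                + r k x)
    (c : ℕ → ℝ) (hc : ∀ k, c k = z - q₂ z / (k : ℝ)) :
    (fun k : ℕ => (μ {ω | -(c k) < T k ω ∧ T k ω ≤ c k}).toReal - (1 - α))
      =O[atTop] fun k : ℕ => 1 / (k : ℝ) ^ 2 := by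
  obtain ⟨q₃, hq₃, r, ⟨C, -, K, hr⟩, hF⟩ := hEdge
  have hq₁_even : q₁.Even := fun y => by rw [hq₁, hq₁]; ring
  have hq₂_odd : q₂.Odd := fun y => by rw [hq₂, hq₂]; ring
  have hdiff : DifferentiableAt ℝ (fun y => q₂ y * stdNormalPDF y) z := by
    have : Differentiable ℝ q₂ := by rw [funext hq₂]; fun_prop
    exact (this z).mul (differentiable_stdNormalPDF z)
  have hc_sub : (fun k => c k - z) =O[atTop] fun k : ℕ => 1 / (k : ℝ) :=
    isBigO_of_le' (c := |q₂ z|) atTop fun k => by simp [hc, div_eq_mul_inv]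
  have hc_lim : Tendsto c atTop (𝓝 z) := by
    rw [funext hc]
    simpa using tendsto_const_nhds.sub (tendsto_const_div_atTop_nhds_zero_nat (q₂ z))
  have hdecomp : ∀ᶠ k : ℕ in atTop,
      2 * (stdNormalCDF (c k) - stdNormalCDF z - stdNormalPDF z * (c k - z))
        + 2 * ((q₂ (c k) * stdNormalPDF (c k) - q₂ z * stdNormalPDF z) * (1 / k))
        + (r k (c k) - r k (-c k))
      = (μ {ω | -(c k) < T k ω ∧ T k ω ≤ c k}).toReal - (1 - α) := by
    filter_upwards [eventually_ge_atTop 1, hc_lim.eventually_const_lt hzpos] with k hk hck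
    rw [toReal_measure_lt_and_le_eq_sub (hmeas k) (by linarith),
      edgeworth_sub_neg hq₁_even hq₂_odd (fun y => hq₃ y) (hF k hk), hc k]
    linear_combination (-2) * hz
  refine IsBigO.congr' ?_ hdecomp EventuallyEq.rfl
  have hcorr : (fun k => (q₂ (c k) * stdNormalPDF (c k) - q₂ z * stdNormalPDF z) * (1 / k))
      =O[atTop] fun k : ℕ => (1 / (k : ℝ)) ^ 2 := by
    simpa only [sq, Function.comp_def] using
      ((hdiff.isBigO_sub.comp_tendsto hc_lim).trans hc_sub).mul (isBigO_refl _ atTop)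
  simpa only [one_div_pow] using
    (((isBigO_stdNormalCDF_sub_sub_mul hc_sub).const_mul_left 2).add
      (hcorr.const_mul_left 2)).add (isBigO_sub_of_abs_le_div_sq hr c (-c ·))

/-- If `Φ(z) = 1 − α/2` with `z > 0` and `(T_k)` admits a third-order
Edgeworth expansion (with some even polynomial `q₃` and uniformly `O(k⁻²)` remainder), then
with `c_k = z − q₂(z)/k` the Edgeworth-corrected two-sided coverage satisfies
`P(−c_k < T_k ≤ c_k) = (1 − α) + O(1/k²)` as `k → ∞`. -/
theorem corrected_two_sided_coverage
    {Ω : Type*} [MeasurableSpace Ω] (μ : Measure Ω) [IsProbabilityMeasure μ]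
    (T : ℕ → Ω → ℝ) (hmeas : ∀ k, Measurable (T k))
    (q₁ q₂ : ℝ → ℝ)
    (hq₁ : ∀ y, q₁ y = Real.sqrt 2 + (2 * Real.sqrt 2 / 3) * (y ^ 2 - 1))
    (hq₂ : ∀ y, q₂ y = -5 * y - (23 / 6) * (y ^ 3 - 3 * y)
        + (4 / 9) * (y ^ 5 - 10 * y ^ 3 + 15 * y))
    (α : ℝ) (hα : α ∈ Set.Ioo (0 : ℝ) 1)
    (z : ℝ) (hzpos : 0 < z) (hz : stdNormalCDF z = 1 - α / 2)
    (hEdge : ∃ q₃ : Polynomial ℝ, (∀ y : ℝ, q₃.eval (-y) = q₃.eval y) ∧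
        ∃ r : ℕ → ℝ → ℝ,
          (∃ C > (0 : ℝ), ∃ K : ℕ, ∀ k : ℕ, K ≤ k → ∀ x : ℝ, |r k x| ≤ C / (k : ℝ) ^ 2) ∧
          ∀ k : ℕ, 1 ≤ k → ∀ x : ℝ,
            (μ {ω | T k ω ≤ x}).toReal
              = stdNormalCDF x + q₁ x * stdNormalPDF x / Real.sqrt k
                + q₂ x * stdNormalPDF x / (k : ℝ)
                + q₃.eval x * stdNormalPDF x / (k : ℝ) ^ ((3 : ℝ) / 2)
                + r k x)
    (c : ℕ → ℝ) (hc : ∀ k, c k = z - q₂ z / (k : ℝ)) :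
    (fun k : ℕ => (μ {ω | -(c k) < T k ω ∧ T k ω ≤ c k}).toReal - (1 - α))
      =O[atTop] fun k : ℕ => 1 / (k : ℝ) ^ 2 :=
  corrected_two_sided_coverage_general μ T hmeas q₁ q₂ hq₁ hq₂ α z hzpos hz hEdge c hc
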